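/- The modular-theoretic sandwiched Rényi relative entropy equals the algebraic one in the finite-dimensional block setting: let A range over a finite index set, let α ∈ (0,1), let (q_A) and (w_A) be probability distributions with strictly positive entries, and for each A let σ_A, τ_A be positive definite density matrices on a finite-dimensional complex Hilbert space H_A. Then the supremum over all probability distributions (p_A) and families (ρ_A) of density matrices on H_A of (1/α) · log [ Σ_A q_A (p_A^α / w_A^α) Tr(ρ_A^α σ_A^{1/2} τ_A^{−α} σ_A^{1/2}) ] equals (n−1)⁻¹ · log [ Σ_A q_A^n w_A^{1−n} exp((n−1) S_n(σ_A ‖ τ_A)) ], where n = 1/(1−α). -/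

import Mathlib

/-!
Write `n = 1/(1-α)` and `X_A = σ_A^{1/2} τ_A^{-α} σ_A^{1/2}`. For a single block, the supremum of
`Tr(ρ^α X)` over density matrices is `(Tr X^n)^{1-α}`: in eigenbases `u_i` of `ρ` and `v_j` of `X`
the trace is `∑ λ_i^α μ_j |⟨u_i, v_j⟩|²`, and since the overlap matrix `|⟨u_i, v_j⟩|²` is doubly
stochastic, Hölder's inequality over pairs `(i, j)` bounds it by `(∑ λ_i)^α (∑ μ_j^n)^{1-α}`, with
equality at `ρ = X^n / Tr X^n`. With `M = σ^{1/2} τ^{-α/2}` one has `X = M Mᴴ`, while the sandwich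
`τ^{-α/2} σ τ^{-α/2}` in `S_n(σ‖τ)` is `Mᴴ M`, which has the same spectrum; so
`Tr X^n = exp((n-1) S_n(σ‖τ))`. The remaining supremum over `p` is Hölder duality on the simplex:
`sup_p ∑ p_A^α a_A = (∑ a_A^n)^{1-α}`.
-/

open Matrix
open scoped Kronecker ComplexOrder

/-- Real power of a Hermitian matrix via the spectral functional calculus
(junk value `0` on non-Hermitian matrices). -/
noncomputable def mpow {m : Type*} [Fintype m] [DecidableEq m]
    (A : Matrix m m ℂ) (r : ℝ) : Matrix m m ℂ :=
  if hA : A.IsHermitian then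
    (hA.eigenvectorUnitary : Matrix m m ℂ) *
      Matrix.diagonal (fun i => ((hA.eigenvalues i ^ r : ℝ) : ℂ)) *
      (star (hA.eigenvectorUnitary : Matrix m m ℂ))
  else 0

/-- Logarithm of a Hermitian matrix via the spectral functional calculus
(junk value `0` on non-Hermitian matrices). -/
noncomputable def mlog {m : Type*} [Fintype m] [DecidableEq m]
    (A : Matrix m m ℂ) : Matrix m m ℂ :=
  if hA : A.IsHermitian then
    (hA.eigenvectorUnitary : Matrix m m ℂ) *
      Matrix.diagonal (fun i => ((Real.log (hA.eigenvalues i) : ℝ) : ℂ)) *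
      (star (hA.eigenvectorUnitary : Matrix m m ℂ))
  else 0

/-- A density matrix: positive semidefinite with unit trace. -/
def IsDensity {m : Type*} [Fintype m] [DecidableEq m] (A : Matrix m m ℂ) : Prop :=
  A.PosSemidef ∧ A.trace = 1

/-- Sandwiched Rényi relative entropy
`S_n(ρ‖σ) = (n-1)⁻¹ log Tr[(σ^{(1-n)/(2n)} ρ σ^{(1-n)/(2n)})^n]`. -/
noncomputable def SRenyi {m : Type*} [Fintype m] [DecidableEq m]
    (n : ℝ) (ρ σ : Matrix m m ℂ) : ℝ :=
  (n - 1)⁻¹ *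
    Real.log ((mpow (mpow σ ((1 - n) / (2 * n)) * ρ * mpow σ ((1 - n) / (2 * n))) n).trace.re)

/-- Quantum relative entropy `S(ρ‖σ) = Tr(ρ log ρ) - Tr(ρ log σ)`. -/
noncomputable def relEnt {m : Type*} [Fintype m] [DecidableEq m]
    (ρ σ : Matrix m m ℂ) : ℝ :=
  ((ρ * mlog ρ).trace - (ρ * mlog σ).trace).re

/-- von Neumann entropy `S(τ) = -Tr(τ log τ)`. -/
noncomputable def vnEnt {m : Type*} [Fintype m] [DecidableEq m]
    (τ : Matrix m m ℂ) : ℝ :=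
  -((τ * mlog τ).trace.re)

lemma exists_pos_of_sum_eq_one {ι : Type*} {s : Finset ι} {p : ι → ℝ} (h : ∑ i ∈ s, p i = 1) :
    ∃ i ∈ s, 0 < p i :=
  Finset.exists_lt_of_sum_lt (f := 0) (by simp [h])

section Holder

variable {ι : Type*} {α n : ℝ}

lemma sum_rpow_mul_rpow_le (s : Finset ι) {x y : ι → ℝ} (hα0 : 0 < α) (hα1 : α < 1)
    (hx : ∀ i ∈ s, 0 ≤ x i) (hy : ∀ i ∈ s, 0 ≤ y i) :
    ∑ i ∈ s, x i ^ α * y i ^ (1 - α) ≤ (∑ i ∈ s, x i) ^ α * (∑ i ∈ s, y i) ^ (1 - α) := by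
  have hroot : ∀ {β : ℝ}, β ≠ 0 → ∀ {z : ι → ℝ}, (∀ i ∈ s, 0 ≤ z i) →
      ∑ i ∈ s, (z i ^ β) ^ β⁻¹ = ∑ i ∈ s, z i := fun hβ _ hz =>
    Finset.sum_congr rfl fun i hi => by rw [← Real.rpow_mul (hz i hi), mul_inv_cancel₀ hβ,
      Real.rpow_one]
  have h := Real.inner_le_Lp_mul_Lq_of_nonneg s (Real.HolderConjugate.inv_one_sub_inv hα0 hα1)
    (fun i hi => Real.rpow_nonneg (hx i hi) α) (fun i hi => Real.rpow_nonneg (hy i hi) (1 - α))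
  rwa [hroot hα0.ne' hx, hroot (sub_pos.mpr hα1).ne' hy, one_div, one_div, inv_inv, inv_inv] at h

variable [Fintype ι]

lemma sum_rpow_mul_le (hα0 : 0 < α) (hα1 : α < 1) (hn : n * (1 - α) = 1) {p a : ι → ℝ}
    (hp : ∀ i, 0 ≤ p i) (hp1 : ∑ i, p i = 1) (ha : ∀ i, 0 ≤ a i) :
    ∑ i, p i ^ α * a i ≤ (∑ i, a i ^ n) ^ (1 - α) := by
  have ha' : ∀ i, (a i ^ n) ^ (1 - α) = a i := fun i => by
    rw [← Real.rpow_mul (ha i), hn, Real.rpow_one]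
  calc ∑ i, p i ^ α * a i = ∑ i, p i ^ α * (a i ^ n) ^ (1 - α) := by simp only [ha']
    _ ≤ (∑ i, p i) ^ α * (∑ i, a i ^ n) ^ (1 - α) :=
      sum_rpow_mul_rpow_le _ hα0 hα1 (fun i _ => hp i) fun i _ => Real.rpow_nonneg (ha i) n
    _ = (∑ i, a i ^ n) ^ (1 - α) := by rw [hp1, Real.one_rpow, one_mul]

lemma sum_div_rpow_mul_eq (hn : n * (1 - α) = 1) {a : ι → ℝ} (ha : ∀ i, 0 ≤ a i)
    (hR : 0 < ∑ i, a i ^ n) :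
    ∑ i, (a i ^ n / ∑ j, a j ^ n) ^ α * a i = (∑ i, a i ^ n) ^ (1 - α) := by
  set R := ∑ i, a i ^ n
  have hn' : n * α + 1 = n := by linarith
  have hterm : ∀ i, (a i ^ n / R) ^ α * a i = a i ^ n / R ^ α := fun i => by
    rw [Real.div_rpow (Real.rpow_nonneg (ha i) n) hR.le, ← Real.rpow_mul (ha i),
      div_mul_eq_mul_div,
      ← Real.rpow_add_one' (ha i) (by rw [hn']; exact left_ne_zero_of_mul_eq_one hn), hn']
  rw [Finset.sum_congr rfl fun i _ => hterm i, ← Finset.sum_div, Real.rpow_sub hR, Real.rpow_one]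

end Holder

section Simplex

variable {ι : Type*} [Fintype ι] {α n : ℝ}

lemma sum_mul_rpow_mul_pos {c p e : ι → ℝ} (hc : ∀ i, 0 < c i) (he : ∀ i, 0 < e i)
    (hp : ∀ i, 0 ≤ p i) (hp1 : ∑ i, p i = 1) : 0 < ∑ i, c i * p i ^ α * e i := by
  obtain ⟨i, -, hi⟩ := exists_pos_of_sum_eq_one hp1
  exact Finset.sum_pos'
    (fun j _ => mul_nonneg (mul_nonneg (hc j).le (Real.rpow_nonneg (hp j) α)) (he j).le)
    ⟨i, Finset.mem_univ i, mul_pos (mul_pos (hc i) (Real.rpow_pos_of_pos hi α)) (he i)⟩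

lemma isGreatest_sum_mul_rpow_mul [Nonempty ι] {X : ι → Type*} {P : ∀ i, X i → Prop}
    {E : ∀ i, X i → ℝ} {M c : ι → ℝ} (hE : ∀ i, IsGreatest {e | ∃ x, P i x ∧ e = E i x} (M i))
    (hE0 : ∀ i x, P i x → 0 < E i x) (hc : ∀ i, 0 < c i) (hα0 : 0 < α) (hα1 : α < 1)
    (hn : n * (1 - α) = 1) :
    IsGreatest {t | ∃ (p : ι → ℝ) (x : ∀ i, X i), (∀ i, 0 ≤ p i) ∧ ∑ i, p i = 1 ∧
        (∀ i, P i (x i)) ∧ t = ∑ i, c i * p i ^ α * E i (x i)}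
      ((∑ i, (c i * M i) ^ n) ^ (1 - α)) := by
  choose x hx hxM using fun i => (hE i).1
  have hcM : ∀ i, 0 < c i * M i := fun i => mul_pos (hc i) (hxM i ▸ hE0 i (x i) (hx i))
  have hR : 0 < ∑ i, (c i * M i) ^ n :=
    Finset.sum_pos (fun i _ => Real.rpow_pos_of_pos (hcM i) n) Finset.univ_nonempty
  refine ⟨⟨fun i => (c i * M i) ^ n / ∑ j, (c j * M j) ^ n, x,
    fun i => div_nonneg (Real.rpow_nonneg (hcM i).le n) hR.le, ?_, hx, ?_⟩, ?_⟩
  · rw [← Finset.sum_div, div_self hR.ne']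
  · rw [← sum_div_rpow_mul_eq hn (fun i => (hcM i).le) hR]
    refine Finset.sum_congr rfl fun i _ => ?_
    rw [← hxM i]
    ring
  · rintro t ⟨p, y, hp, hp1, hy, rfl⟩
    calc ∑ i, c i * p i ^ α * E i (y i) ≤ ∑ i, p i ^ α * (c i * M i) :=
          Finset.sum_le_sum fun i _ => by
            rw [mul_left_comm, ← mul_assoc]
            exact mul_le_mul_of_nonneg_left ((hE i).2 ⟨y i, hy i, rfl⟩)
              (mul_nonneg (hc i).le (Real.rpow_nonneg (hp i) α))
      _ ≤ (∑ i, (c i * M i) ^ n) ^ (1 - α) :=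
          sum_rpow_mul_le hα0 hα1 hn hp hp1 fun i => (hcM i).le

end Simplex

lemma csSup_image_const_mul_log {S : Set ℝ} {V a : ℝ} (hS : IsGreatest S V)
    (hS0 : S ⊆ Set.Ioi 0) (ha : 0 ≤ a) : sSup ((fun s => a * Real.log s) '' S) = a * Real.log V :=
  ((MonotoneOn.mono (fun _ hx _ _ hxy => mul_le_mul_of_nonneg_left (Real.log_le_log hx hxy) ha)
    hS0).map_isGreatest hS).csSup_eq

section Spectral

variable {m : Type*} [Fintype m] [DecidableEq m] {A B : Matrix m m ℂ}

lemma mpow_eq_cfc (hA : A.IsHermitian) (r : ℝ) : mpow A r = cfc (fun x : ℝ => x ^ r) A := by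
  rw [mpow, dif_pos hA, hA.cfc_eq, IsHermitian.cfc, Unitary.conjStarAlgAut_apply]
  rfl

lemma isHermitian_mpow (A : Matrix m m ℂ) (r : ℝ) : (mpow A r).IsHermitian := by
  by_cases hA : A.IsHermitian
  · rw [mpow_eq_cfc hA]
    exact cfc_predicate _ A
  · rw [mpow, dif_neg hA]
    exact isHermitian_zero

lemma trace_cfc (hA : A.IsHermitian) (f : ℝ → ℝ) :
    (cfc f A).trace = ∑ i, (f (hA.eigenvalues i) : ℂ) := by
  rw [hA.cfc_eq, IsHermitian.cfc, Unitary.conjStarAlgAut_apply, trace_mul_cycle,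
    Unitary.coe_star_mul_self, one_mul, trace_diagonal]
  rfl

lemma trace_cfc_mul_conjTranspose (M : Matrix m m ℂ) (f : ℝ → ℝ) :
    (cfc f (M * Mᴴ)).trace = (cfc f (Mᴴ * M)).trace := by
  have hMM := isHermitian_mul_conjTranspose_self M
  have hMM' := isHermitian_conjTranspose_mul_self M
  rw [trace_cfc hMM, trace_cfc hMM',
    (hMM.eigenvalues_eq_eigenvalues_iff hMM').mpr (charpoly_mul_comm _ _)]

lemma mpow_one (hA : A.IsHermitian) : mpow A 1 = A := by
  simp only [mpow_eq_cfc hA, Real.rpow_one]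
  exact cfc_id' ℝ A

lemma mpow_mul_mpow (hA : A.PosDef) (r s : ℝ) : mpow A r * mpow A s = mpow A (r + s) := by
  have hfin := Matrix.finite_real_spectrum (A := A)
  rw [mpow_eq_cfc hA.1, mpow_eq_cfc hA.1, mpow_eq_cfc hA.1,
    ← cfc_mul _ _ A (hfin.continuousOn _) (hfin.continuousOn _)]
  refine cfc_congr fun x hx => ?_
  rw [hA.1.spectrum_real_eq_range_eigenvalues] at hx
  obtain ⟨i, rfl⟩ := hx
  exact (Real.rpow_add (hA.eigenvalues_pos i) r s).symm

lemma trace_mpow_sandwich_comm (hA : A.PosDef) (hB : B.PosDef) (s t r : ℝ) :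
    (mpow (mpow A s * mpow B (2 * t) * mpow A s) r).trace =
      (mpow (mpow B t * mpow A (2 * s) * mpow B t) r).trace := by
  set M := mpow A s * mpow B t
  have hMstar : Mᴴ = mpow B t * mpow A s := by
    rw [conjTranspose_mul, (isHermitian_mpow A s).eq, (isHermitian_mpow B t).eq]
  have hMMstar : mpow A s * mpow B (2 * t) * mpow A s = M * Mᴴ := by
    rw [hMstar, two_mul, ← mpow_mul_mpow hB]
    simp only [M, mul_assoc]
  have hMstarM : mpow B t * mpow A (2 * s) * mpow B t = Mᴴ * M := by
    rw [hMstar, two_mul, ← mpow_mul_mpow hA]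
    simp only [M, mul_assoc]
  rw [hMMstar, hMstarM, mpow_eq_cfc (isHermitian_mul_conjTranspose_self M),
    mpow_eq_cfc (isHermitian_conjTranspose_mul_self M), trace_cfc_mul_conjTranspose]

end Spectral

section Overlap

variable {m : Type*} [Fintype m] [DecidableEq m] {A B : Matrix m m ℂ}

lemma sum_normSq_unitary_apply_right (U : unitaryGroup m ℂ) (i : m) :
    ∑ j, Complex.normSq ((U : Matrix m m ℂ) i j) = 1 := by
  have h := congrFun (congrFun (Unitary.coe_mul_star_self U) i) i
  simp only [Unitary.coe_star, mul_apply, star_apply, RCLike.star_def, Complex.mul_conj,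
    one_apply_eq] at h
  exact_mod_cast h

lemma sum_normSq_unitary_apply_left (U : unitaryGroup m ℂ) (j : m) :
    ∑ i, Complex.normSq ((U : Matrix m m ℂ) i j) = 1 := by
  simpa only [Unitary.coe_star, star_apply, RCLike.star_def, Complex.normSq_conj] using
    sum_normSq_unitary_apply_right (star U) j

lemma trace_diagonal_mul_mul_diagonal_mul_star (a b : m → ℝ) (W : Matrix m m ℂ) :
    (diagonal (fun i => (a i : ℂ)) * W * diagonal (fun j => (b j : ℂ)) * star W).trace =
      ((∑ i, ∑ j, a i * b j * Complex.normSq (W i j) : ℝ) : ℂ) := by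
  push_cast
  refine Finset.sum_congr rfl fun i _ => ?_
  rw [diag_apply, mul_apply]
  simp only [mul_diagonal, diagonal_mul, star_apply, RCLike.star_def]
  refine Finset.sum_congr rfl fun j _ => ?_
  rw [← Complex.mul_conj]
  ring

/-- `|⟨u_i, v_j⟩|²` for the eigenbases `(u_i)` of `A` and `(v_j)` of `B`. -/
noncomputable def eigenOverlap (hA : A.IsHermitian) (hB : B.IsHermitian) (i j : m) : ℝ :=
  Complex.normSq
    (((star hA.eigenvectorUnitary * hB.eigenvectorUnitary : unitaryGroup m ℂ) : Matrix m m ℂ) i j)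

lemma eigenOverlap_nonneg (hA : A.IsHermitian) (hB : B.IsHermitian) (i j : m) :
    0 ≤ eigenOverlap hA hB i j :=
  Complex.normSq_nonneg _

lemma sum_eigenOverlap_right (hA : A.IsHermitian) (hB : B.IsHermitian) (i : m) :
    ∑ j, eigenOverlap hA hB i j = 1 :=
  sum_normSq_unitary_apply_right _ i

lemma sum_eigenOverlap_left (hA : A.IsHermitian) (hB : B.IsHermitian) (j : m) :
    ∑ i, eigenOverlap hA hB i j = 1 :=
  sum_normSq_unitary_apply_left _ j

lemma re_trace_cfc_mul (hA : A.IsHermitian) (hB : B.IsHermitian) (f : ℝ → ℝ) :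
    (cfc f A * B).trace.re =
      ∑ i, ∑ j, f (hA.eigenvalues i) * hB.eigenvalues j * eigenOverlap hA hB i j := by
  set U : Matrix m m ℂ := (hA.eigenvectorUnitary : Matrix m m ℂ)
  set V : Matrix m m ℂ := (hB.eigenvectorUnitary : Matrix m m ℂ)
  have hB' : B = V * diagonal (fun j => (hB.eigenvalues j : ℂ)) * star V := by
    conv_lhs => rw [hB.spectral_theorem, Unitary.conjStarAlgAut_apply]
    rfl
  have hW : ((star hA.eigenvectorUnitary * hB.eigenvectorUnitary : unitaryGroup m ℂ) :
      Matrix m m ℂ) = star U * V := by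
    rw [Submonoid.coe_mul, Unitary.coe_star]
  have key : (cfc f A * B).trace = (diagonal (fun i => (f (hA.eigenvalues i) : ℂ)) *
      (star U * V) * diagonal (fun j => (hB.eigenvalues j : ℂ)) * star (star U * V)).trace := by
    rw [hA.cfc_eq, IsHermitian.cfc, Unitary.conjStarAlgAut_apply]
    nth_rewrite 1 [hB']
    rw [star_mul, star_star]
    simp only [mul_assoc]
    rw [trace_mul_comm]
    simp only [mul_assoc]
    rfl
  rw [key, trace_diagonal_mul_mul_diagonal_mul_star, Complex.ofReal_re]
  simp only [eigenOverlap, hW]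

end Overlap

section Variational

variable {m : Type*} [Fintype m] [DecidableEq m] {A ρ X : Matrix m m ℂ} {α n : ℝ}

lemma re_trace_mpow (hA : A.IsHermitian) (r : ℝ) :
    (mpow A r).trace.re = ∑ i, hA.eigenvalues i ^ r := by
  rw [mpow_eq_cfc hA, trace_cfc hA, Complex.re_sum]
  rfl

lemma posSemidef_cfc (hA : A.IsHermitian) {f : ℝ → ℝ} (hf : ∀ i, 0 ≤ f (hA.eigenvalues i)) :
    (cfc f A).PosSemidef := by
  rw [hA.cfc_eq, IsHermitian.cfc, Unitary.conjStarAlgAut_apply, star_eq_conjTranspose]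
  exact PosSemidef.mul_mul_conjTranspose_same
    (posSemidef_diagonal_iff.mpr fun i => Complex.zero_le_real.mpr (hf i)) _

lemma IsDensity.sum_eigenvalues (hρ : IsDensity ρ) : ∑ i, hρ.1.1.eigenvalues i = 1 := by
  have h := hρ.1.1.trace_eq_sum_eigenvalues
  simpa using congrArg Complex.re (h.symm.trans hρ.2)

lemma IsDensity.nonempty (hρ : IsDensity ρ) : Nonempty m :=
  ⟨(exists_pos_of_sum_eq_one hρ.sum_eigenvalues).choose⟩

lemma re_trace_mpow_mul (hρ : ρ.IsHermitian) (hX : X.IsHermitian) :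
    (mpow ρ α * X).trace.re =
      ∑ i, ∑ j, hρ.eigenvalues i ^ α * hX.eigenvalues j * eigenOverlap hρ hX i j := by
  rw [mpow_eq_cfc hρ]
  exact re_trace_cfc_mul hρ hX _

lemma re_trace_mpow_mul_pos (hρ : IsDensity ρ) (hX : X.PosDef) :
    0 < (mpow ρ α * X).trace.re := by
  have hc := eigenOverlap_nonneg hρ.1.1 hX.1
  have hlam := hρ.1.eigenvalues_nonneg
  have hμ := hX.eigenvalues_pos
  rw [re_trace_mpow_mul hρ.1.1 hX.1]
  obtain ⟨i, -, hi⟩ := exists_pos_of_sum_eq_one hρ.sum_eigenvalues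
  obtain ⟨j, -, hj⟩ := exists_pos_of_sum_eq_one (sum_eigenOverlap_right hρ.1.1 hX.1 i)
  refine Finset.sum_pos' (fun i _ => Finset.sum_nonneg fun j _ => ?_)
    ⟨i, Finset.mem_univ i, Finset.sum_pos' (fun j _ => ?_) ⟨j, Finset.mem_univ j, ?_⟩⟩
  · have := hlam i; have := hμ j; have := hc i j; positivity
  · have := hμ j; have := hc i j; positivity
  · have := hμ j; positivity

lemma re_trace_mpow_mul_le (hρ : IsDensity ρ) (hX : X.PosSemidef) (hα0 : 0 < α) (hα1 : α < 1)
    (hn : n * (1 - α) = 1) :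
    (mpow ρ α * X).trace.re ≤ (mpow X n).trace.re ^ (1 - α) := by
  have hc := eigenOverlap_nonneg hρ.1.1 hX.1
  have hlam := hρ.1.eigenvalues_nonneg
  have hμ := hX.eigenvalues_nonneg
  have hlam1 := hρ.sum_eigenvalues
  rw [re_trace_mpow_mul hρ.1.1 hX.1, re_trace_mpow hX.1]
  set lam := hρ.1.1.eigenvalues
  set μ := hX.1.eigenvalues
  set c := eigenOverlap hρ.1.1 hX.1
  have hterm : ∀ i j, lam i ^ α * μ j * c i j =
      (c i j * lam i) ^ α * (c i j * μ j ^ n) ^ (1 - α) := by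
    intro i j
    rw [Real.mul_rpow (hc i j) (hlam i), Real.mul_rpow (hc i j) (Real.rpow_nonneg (hμ j) n),
      ← Real.rpow_mul (hμ j), hn, Real.rpow_one]
    have hcc : c i j ^ α * c i j ^ (1 - α) = c i j := by
      rw [← Real.rpow_add' (hc i j) (by norm_num), add_sub_cancel, Real.rpow_one]
    linear_combination -(lam i ^ α * μ j) * hcc
  calc ∑ i, ∑ j, lam i ^ α * μ j * c i j
      = ∑ k : m × m, (c k.1 k.2 * lam k.1) ^ α * (c k.1 k.2 * μ k.2 ^ n) ^ (1 - α) := by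
        simp only [hterm, Fintype.sum_prod_type]
    _ ≤ (∑ k : m × m, c k.1 k.2 * lam k.1) ^ α * (∑ k : m × m, c k.1 k.2 * μ k.2 ^ n) ^ (1 - α) :=
        sum_rpow_mul_rpow_le _ hα0 hα1 (fun k _ => mul_nonneg (hc _ _) (hlam _))
          (fun k _ => mul_nonneg (hc _ _) (Real.rpow_nonneg (hμ _) n))
    _ = (∑ j, μ j ^ n) ^ (1 - α) := by
        rw [Fintype.sum_prod_type, Fintype.sum_prod_type, Finset.sum_comm (s := Finset.univ)
          (t := Finset.univ) (f := fun i j => c i j * μ j ^ n)]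
        simp only [← Finset.sum_mul, c, sum_eigenOverlap_right, sum_eigenOverlap_left, one_mul]
        rw [hlam1, Real.one_rpow, one_mul]

lemma exists_isDensity_re_trace_mpow_mul_eq (hX : X.PosSemidef) (hn : n * (1 - α) = 1)
    (hT : 0 < (mpow X n).trace.re) :
    ∃ ρ, IsDensity ρ ∧ (mpow ρ α * X).trace.re = (mpow X n).trace.re ^ (1 - α) := by
  set μ := hX.1.eigenvalues
  have hμ := hX.eigenvalues_nonneg
  rw [re_trace_mpow hX.1] at hT ⊢
  set T := ∑ j, μ j ^ n
  have hfin := Matrix.finite_real_spectrum (A := X)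
  let g : ℝ → ℝ := fun x => x ^ n / T
  have hg : ∀ j, 0 ≤ g (μ j) := fun j => div_nonneg (Real.rpow_nonneg (hμ j) n) hT.le
  have hρ : IsDensity (cfc g X) := by
    refine ⟨posSemidef_cfc hX.1 hg, ?_⟩
    rw [trace_cfc hX.1]
    exact_mod_cast (Finset.sum_div _ _ _).symm.trans (div_self hT.ne')
  refine ⟨cfc g X, hρ, ?_⟩
  have hprod : mpow (cfc g X) α * X = cfc (fun x => g x ^ α * x) X := by
    rw [mpow_eq_cfc hρ.1.1, ← cfc_comp' _ _ _ ((hfin.image _).continuousOn _) (hfin.continuousOn _)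
      hX.1.isSelfAdjoint,
      cfc_mul _ _ X ((hfin.continuousOn _)) (hfin.continuousOn _), cfc_id' ℝ X hX.1.isSelfAdjoint]
  rw [hprod, trace_cfc hX.1, Complex.re_sum]
  exact sum_div_rpow_mul_eq hn hμ hT
end Variational

section Block

variable {m : Type*} [Fintype m] [DecidableEq m] {A : Matrix m m ℂ} {α n : ℝ}

lemma posDef_mpow (hA : A.PosDef) (r : ℝ) : (mpow A r).PosDef := by
  rw [mpow, dif_pos hA.1, star_eq_conjTranspose]
  refine (posDef_diagonal_iff.mpr fun i => ?_).mul_mul_conjTranspose_same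
    (vecMul_injective_iff_isUnit.mpr (Unitary.isUnit_coe))
  exact_mod_cast Real.rpow_pos_of_pos (hA.eigenvalues_pos i) r

lemma posDef_mpow_mul_mpow_mul_mpow {σ τ : Matrix m m ℂ} (hσ : σ.PosDef) (hτ : τ.PosDef) (s t : ℝ) :
    (mpow σ s * mpow τ t * mpow σ s).PosDef := by
  have h := (posDef_mpow hτ t).conjTranspose_mul_mul_same
    (mulVec_injective_iff_isUnit.mpr (posDef_mpow hσ s).isUnit)
  rwa [(isHermitian_mpow σ s).eq] at h

lemma re_trace_mpow_mul_sandwich_pos {ρ σ τ : Matrix m m ℂ} (hρ : IsDensity ρ) (hσ : σ.PosDef)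
    (hτ : τ.PosDef) (s t : ℝ) : 0 < (mpow ρ α * mpow σ s * mpow τ t * mpow σ s).trace.re := by
  simpa only [mul_assoc] using re_trace_mpow_mul_pos hρ (posDef_mpow_mul_mpow_mul_mpow hσ hτ s t)

lemma re_trace_mpow_pos [Nonempty m] (hA : A.PosDef) (r : ℝ) : 0 < (mpow A r).trace.re := by
  rw [re_trace_mpow hA.1]
  exact Finset.sum_pos (fun i _ => Real.rpow_pos_of_pos (hA.eigenvalues_pos i) r)
    Finset.univ_nonempty

lemma exp_sub_one_mul_sRenyi [Nonempty m] {σ τ : Matrix m m ℂ} (hσ : σ.PosDef) (hτ : τ.PosDef)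
    (hα0 : 0 < α) (hn : n * (1 - α) = 1) :
    Real.exp ((n - 1) * SRenyi n σ τ) =
      (mpow (mpow σ (1 / 2) * mpow τ (-α) * mpow σ (1 / 2)) n).trace.re := by
  have hexponent : (1 - n) / (2 * n) = -α / 2 := by
    field_simp [left_ne_zero_of_mul_eq_one hn]
    linear_combination -hn
  have hn1 : n - 1 ≠ 0 := fun h1 => by rw [sub_eq_zero.mp h1] at hn; linarith
  have h := trace_mpow_sandwich_comm hσ hτ (1 / 2) (-α / 2) n
  rw [mul_div_cancel₀ _ two_ne_zero, mul_one_div_cancel two_ne_zero, mpow_one hσ.1] at h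
  rw [SRenyi, hexponent, ← h, ← mul_assoc, mul_inv_cancel₀ hn1, one_mul,
    Real.exp_log (re_trace_mpow_pos (posDef_mpow_mul_mpow_mul_mpow hσ hτ _ _) n)]

lemma isGreatest_re_trace_mpow_mul_sandwich [Nonempty m] {σ τ : Matrix m m ℂ} (hσ : σ.PosDef)
    (hτ : τ.PosDef) (hα0 : 0 < α) (hα1 : α < 1) (hn : n * (1 - α) = 1) :
    IsGreatest {e | ∃ ρ, IsDensity ρ ∧
        e = (mpow ρ α * mpow σ (1 / 2) * mpow τ (-α) * mpow σ (1 / 2)).trace.re}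
      (Real.exp ((n - 1) * SRenyi n σ τ) ^ (1 - α)) := by
  rw [exp_sub_one_mul_sRenyi hσ hτ hα0 hn]
  set X := mpow σ (1 / 2) * mpow τ (-α) * mpow σ (1 / 2)
  have hX : X.PosDef := posDef_mpow_mul_mpow_mul_mpow hσ hτ _ _
  have hassoc : ∀ ρ : Matrix m m ℂ,
      mpow ρ α * mpow σ (1 / 2) * mpow τ (-α) * mpow σ (1 / 2) = mpow ρ α * X := fun ρ => by
    simp only [X, mul_assoc]
  simp only [hassoc]
  obtain ⟨ρ, hρ, hρX⟩ :=
    exists_isDensity_re_trace_mpow_mul_eq hX.posSemidef hn (re_trace_mpow_pos hX n)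
  exact ⟨⟨ρ, hρ, hρX.symm⟩,
    fun e ⟨ρ, hρ, he⟩ => he ▸ re_trace_mpow_mul_le hρ hX.posSemidef hα0 hα1 hn⟩

end Block

lemma div_rpow_mul_rpow_one_sub_rpow {q w T α n : ℝ} (hq : 0 < q) (hw : 0 < w) (hT : 0 < T)
    (hn : n * (1 - α) = 1) :
    (q / w ^ α * T ^ (1 - α)) ^ n = q ^ n * w ^ (1 - n) * T := by
  rw [Real.mul_rpow (by positivity) (by positivity), Real.div_rpow hq.le (by positivity),
    ← Real.rpow_mul hw.le, ← Real.rpow_mul hT.le, mul_comm (1 - α), hn, Real.rpow_one,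
    div_eq_mul_inv, ← Real.rpow_neg hw.le]
  congr 3
  linarith

theorem modular_srenyi_eq_algebraic_general {ι : Type*} [Fintype ι] (dA : ι → ℕ)
    (α : ℝ) (hα : α ∈ Set.Ioo (0 : ℝ) 1)
    (q w : ι → ℝ) (hq : ∀ A, 0 < q A) (hq1 : ∑ A, q A = 1)
    (hw : ∀ A, 0 < w A)
    (σ τ : ∀ A, Matrix (Fin (dA A)) (Fin (dA A)) ℂ)
    (hσ : ∀ A, IsDensity (σ A))
    (hσpd : ∀ A, (σ A).PosDef) (hτpd : ∀ A, (τ A).PosDef)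
    (n : ℝ) (hn : n = 1 / (1 - α)) :
    sSup {t : ℝ | ∃ (p : ι → ℝ) (ρ : ∀ A, Matrix (Fin (dA A)) (Fin (dA A)) ℂ),
        (∀ A, 0 ≤ p A) ∧ (∑ A, p A = 1) ∧ (∀ A, IsDensity (ρ A)) ∧
        t = (1 / α) * Real.log (∑ A, q A * (p A ^ α / w A ^ α) *
          ((mpow (ρ A) α * mpow (σ A) (1 / 2) * mpow (τ A) (-α) *
            mpow (σ A) (1 / 2)).trace.re))} =
      (n - 1)⁻¹ *
        Real.log (∑ A, q A ^ n * w A ^ (1 - n) *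
          Real.exp ((n - 1) * SRenyi n (σ A) (τ A))) := by
  obtain ⟨hα0, hα1⟩ := hα
  have hn' : n * (1 - α) = 1 := by rw [hn, one_div, inv_mul_cancel₀ (sub_pos.mpr hα1).ne']
  have : Nonempty ι := ⟨(exists_pos_of_sum_eq_one hq1).choose⟩
  have hc A : 0 < q A / w A ^ α := div_pos (hq A) (Real.rpow_pos_of_pos (hw A) α)
  have hE A ρ (hρ : IsDensity ρ) :=
    re_trace_mpow_mul_sandwich_pos (α := α) hρ (hσpd A) (hτpd A) (1 / 2) (-α)
  have hS := isGreatest_sum_mul_rpow_mul (fun A => haveI := (hσ A).nonempty;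
    isGreatest_re_trace_mpow_mul_sandwich (hσpd A) (hτpd A) hα0 hα1 hn') hE hc hα0 hα1 hn'
  simp only [div_rpow_mul_rpow_one_sub_rpow (hq _) (hw _) (Real.exp_pos _) hn'] at hS
  have hR : 0 < ∑ A, q A ^ n * w A ^ (1 - n) * Real.exp ((n - 1) * SRenyi n (σ A) (τ A)) :=
    Finset.sum_pos (fun A _ => by have := hq A; have := hw A; positivity) Finset.univ_nonempty
  convert csSup_image_const_mul_log hS ?_ (one_div_pos.mpr hα0).le using 1
  · congr 1
    ext t
    simp only [Set.mem_image, Set.mem_ofPred_eq, mul_div_assoc', div_mul_eq_mul_div]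
    constructor
    · rintro ⟨p, ρ, hp, hp1, hρ, rfl⟩
      exact ⟨_, ⟨p, ρ, hp, hp1, hρ, rfl⟩, rfl⟩
    · rintro ⟨_, ⟨p, ρ, hp, hp1, hρ, rfl⟩, rfl⟩
      exact ⟨p, ρ, hp, hp1, hρ, rfl⟩
  · rw [Real.log_rpow hR, ← mul_assoc]
    congr 1
    rw [hn, div_sub_one (sub_pos.mpr hα1).ne', sub_sub_cancel, inv_div]
    ring
  · rintro s ⟨p, ρ, hp, hp1, hρ, rfl⟩
    exact sum_mul_rpow_mul_pos hc (fun A => hE A (ρ A) (hρ A)) hp hp1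

/-- the modular-theoretic (Lashkari) sandwiched Rényi relative entropy equals
the algebraic sandwiched Rényi relative entropy in the finite-dimensional block setting:
the supremum over probability distributions `(p_A)` and density matrices `(ρ_A)` of
`(1/α) log [Σ_A q_A (p_A^α/w_A^α) Tr(ρ_A^α σ_A^{1/2} τ_A^{-α} σ_A^{1/2})]` equals
`(n-1)⁻¹ log [Σ_A q_A^n w_A^{1-n} exp((n-1) S_n(σ_A‖τ_A))]` with `n = 1/(1-α)`. -/
theorem modular_srenyi_eq_algebraic {ι : Type*} [Fintype ι] (dA : ι → ℕ)
    (α : ℝ) (hα : α ∈ Set.Ioo (0 : ℝ) 1)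
    (q w : ι → ℝ) (hq : ∀ A, 0 < q A) (hq1 : ∑ A, q A = 1)
    (hw : ∀ A, 0 < w A) (hw1 : ∑ A, w A = 1)
    (σ τ : ∀ A, Matrix (Fin (dA A)) (Fin (dA A)) ℂ)
    (hσ : ∀ A, IsDensity (σ A)) (hτ : ∀ A, IsDensity (τ A))
    (hσpd : ∀ A, (σ A).PosDef) (hτpd : ∀ A, (τ A).PosDef)
    (n : ℝ) (hn : n = 1 / (1 - α)) :
    sSup {t : ℝ | ∃ (p : ι → ℝ) (ρ : ∀ A, Matrix (Fin (dA A)) (Fin (dA A)) ℂ),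
        (∀ A, 0 ≤ p A) ∧ (∑ A, p A = 1) ∧ (∀ A, IsDensity (ρ A)) ∧
        t = (1 / α) * Real.log (∑ A, q A * (p A ^ α / w A ^ α) *
          ((mpow (ρ A) α * mpow (σ A) (1 / 2) * mpow (τ A) (-α) *
            mpow (σ A) (1 / 2)).trace.re))} =
      (n - 1)⁻¹ *
        Real.log (∑ A, q A ^ n * w A ^ (1 - n) *
          Real.exp ((n - 1) * SRenyi n (σ A) (τ A))) :=
  modular_srenyi_eq_algebraic_general dA α hα q w hq hq1 hw σ τ hσ hσpd hτpd n hn
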